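/- arXiv:1403.5741 — 2 statements merged into one kernel-verified Lean document; each statement's English description precedes it below -/
import Mathlib

section
/- Let E be a locally convex space. A subset U of E is c^∞-open (open in the Mackey-closure topology) if and only if for every point x ∈ U and every sequence (x_n) in E that Mackey-converges to x, there exists N ∈ ℕ such that x_n ∈ U for all n ≥ N. -/
open Filter Topology Set Bornology Pointwise

universe u v

/-- Gâteaux derivative of `Φ` at `x` in direction `v`, with value `w`. -/
def HasGDerivAt {E : Type u} {F : Type v} [AddCommGroup E] [Module ℝ E]
    [AddCommGroup F] [Module ℝ F] [TopologicalSpace F]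
    (Φ : E → F) (x v : E) (w : F) : Prop :=
  Tendsto (fun t : ℝ => t⁻¹ • (Φ (x + t • v) - Φ x)) (𝓝[≠] (0 : ℝ)) (𝓝 w)

/-- Derivative of a curve `c : ℝ → E` at `t`, with value `v`. -/
def CurveDerivAt {E : Type u} [AddCommGroup E] [Module ℝ E] [TopologicalSpace E]
    (c : ℝ → E) (v : E) (t : ℝ) : Prop :=
  Tendsto (fun h : ℝ => h⁻¹ • (c (t + h) - c t)) (𝓝[≠] (0 : ℝ)) (𝓝 v)

/-- The curve `c` is of class `C^k`: derivatives up to order `k` exist and are continuous. -/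
def IsCkCurve {E : Type u} [AddCommGroup E] [Module ℝ E] [TopologicalSpace E]
    (k : ℕ) (c : ℝ → E) : Prop :=
  ∃ D : ℕ → ℝ → E, D 0 = c ∧ (∀ n < k, ∀ t, CurveDerivAt (D n) (D (n + 1) t) t) ∧
    ∀ n ≤ k, Continuous (D n)

/-- The curve `c` is smooth (`C^∞`): all iterated derivatives exist and are continuous. -/
def IsSmoothCurve {E : Type u} [AddCommGroup E] [Module ℝ E] [TopologicalSpace E]
    (c : ℝ → E) : Prop :=
  ∃ D : ℕ → ℝ → E, D 0 = c ∧ (∀ n, ∀ t, CurveDerivAt (D n) (D (n + 1) t) t) ∧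
    ∀ n, Continuous (D n)

/-- The set of difference quotients of `c` over `J`. -/
def DiffQuotients {E : Type u} [AddCommGroup E] [Module ℝ E]
    (c : ℝ → E) (J : Set ℝ) : Set E :=
  {x | ∃ t₁ ∈ J, ∃ t₂ ∈ J, t₁ ≠ t₂ ∧ x = (t₂ - t₁)⁻¹ • (c t₂ - c t₁)}

/-- `c` is Lipschitz on `J`: its set of difference quotients over `J` is bounded. -/
def LipschitzOnSet {E : Type u} [AddCommGroup E] [Module ℝ E] [TopologicalSpace E]
    (c : ℝ → E) (J : Set ℝ) : Prop :=
  IsVonNBounded ℝ (DiffQuotients c J)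

/-- `c` is locally Lipschitz: every real has a neighborhood on which `c` is Lipschitz. -/
def LocallyLipschitzCurve {E : Type u} [AddCommGroup E] [Module ℝ E] [TopologicalSpace E]
    (c : ℝ → E) : Prop :=
  ∀ t : ℝ, ∃ J ∈ 𝓝 t, LipschitzOnSet c J

/-- `c` is of class `Lip^k`: derivatives up to order `k` exist and the `k`-th one is
locally Lipschitz. -/
def IsLipkCurve {E : Type u} [AddCommGroup E] [Module ℝ E] [TopologicalSpace E]
    (k : ℕ) (c : ℝ → E) : Prop :=
  ∃ D : ℕ → ℝ → E, D 0 = c ∧ (∀ n < k, ∀ t, CurveDerivAt (D n) (D (n + 1) t) t) ∧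
    LocallyLipschitzCurve (D k)

/-- A set is absolutely convex if it is convex and balanced. -/
def AbsolutelyConvex {E : Type u} [AddCommGroup E] [Module ℝ E] (B : Set E) : Prop :=
  Convex ℝ B ∧ Balanced ℝ B

/-- A sequence `x` Mackey-converges to `l`. -/
def MackeyConvSeq {E : Type u} [AddCommGroup E] [Module ℝ E] [TopologicalSpace E]
    (x : ℕ → E) (l : E) : Prop :=
  ∃ B : Set E, AbsolutelyConvex B ∧ IsVonNBounded ℝ B ∧
    ∃ μ : ℕ → ℝ, Tendsto μ atTop (𝓝 (0 : ℝ)) ∧ ∀ n, x n - l ∈ μ n • B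

/-- `E` is Mackey-complete: every Mackey-Cauchy net converges. -/
def MackeyComplete (E : Type u) [AddCommGroup E] [Module ℝ E] [TopologicalSpace E] : Prop :=
  ∀ (ι : Type) [Nonempty ι] [SemilatticeSup ι] (x : ι → E),
    (∃ B : Set E, AbsolutelyConvex B ∧ IsVonNBounded ℝ B ∧
      ∃ μ : ι × ι → ℝ, Tendsto μ atTop (𝓝 (0 : ℝ)) ∧ ∀ i j, x i - x j ∈ μ (i, j) • B) →
    ∃ l, Tendsto x atTop (𝓝 l)

/-- The Mackey-closure (`c^∞`) topology: the finest topology on `E` making all smooth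
curves `ℝ → E` continuous. -/
def cInfTopology (E : Type u) [AddCommGroup E] [Module ℝ E] [TopologicalSpace E] :
    TopologicalSpace E :=
  ⨆ c : {c : ℝ → E // IsSmoothCurve c}, TopologicalSpace.coinduced c.1 inferInstance

/-- `Φ` is conveniently smooth on `U`: it sends smooth curves into `U` to smooth curves. -/
def ConvSmoothOn {E : Type u} {F : Type v} [AddCommGroup E] [Module ℝ E] [TopologicalSpace E]
    [AddCommGroup F] [Module ℝ F] [TopologicalSpace F]
    (Φ : E → F) (U : Set E) : Prop :=
  ∀ c : ℝ → E, IsSmoothCurve c → (∀ t, c t ∈ U) → IsSmoothCurve (Φ ∘ c)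

/-- Bastiani `C^k` maps: `C^0` means continuous on `U`; `C^{k+1}` means the Gâteaux
differential exists on `U × E` and is `C^k` there. -/
def IsCBastOn (F : Type v) [AddCommGroup F] [Module ℝ F] [TopologicalSpace F] :
    (k : ℕ) → (E : Type u) → [AddCommGroup E] → [Module ℝ E] → [TopologicalSpace E] →
      (E → F) → Set E → Prop
  | 0, _, _, _, _, Φ, U => ContinuousOn Φ U
  | k + 1, E, iA, iM, iT, Φ, U =>
      letI : AddCommGroup E := iA
      letI : Module ℝ E := iM
      letI : TopologicalSpace E := iT
      ∃ D : E × E → F, (∀ x ∈ U, ∀ v, HasGDerivAt Φ x v (D (x, v))) ∧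
        IsCBastOn F k (E × E) D (U ×ˢ (Set.univ : Set E))

/-- `Φ` is smooth on `U` in the sense of Bastiani. -/
def BastSmoothOn {E : Type u} {F : Type v} [AddCommGroup E] [Module ℝ E] [TopologicalSpace E]
    [AddCommGroup F] [Module ℝ F] [TopologicalSpace F]
    (Φ : E → F) (U : Set E) : Prop :=
  ∀ k : ℕ, IsCBastOn F k E Φ U

/-- The absolutely convex hull of the closure of `A`. -/
def absConvexHullOfClosure {E : Type u} [AddCommGroup E] [Module ℝ E] [TopologicalSpace E]
    (A : Set E) : Set E :=
  ⋂₀ {t | closure A ⊆ t ∧ AbsolutelyConvex t}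


/-!
Both directions compare smooth curves with Mackey-convergent sequences, the `c^∞`-open sets being
those whose preimages under all smooth curves are open.

If `c` is smooth, the mean value theorem, tested against the continuous functionals that
Hahn–Banach provides, puts the difference quotients of `c` over `[t₀ - 1, t₀ + 1]` into the closed
convex hull of the compact set `c'([t₀ - 1, t₀ + 1])`, a bounded set; hence `c (tₙ)` converges to
`c t₀` in the sense of Mackey whenever `tₙ → t₀`.

Conversely, let `xₙ - x ∈ μₙ • B` with `μₙ → 0` and pass to a subsequence with
`|μ_{nₘ}| ≤ 2^{-m²}`. For a bump `ψ` supported in `[5/4, 7/4]`, the curve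
`t ↦ x + ∑ₘ μ_{nₘ} ψ(2ᵐ t) bₘ` passes through `x_{nₘ}` at `t = 3/2 · 2^{-m}`. It is smooth: the
terms have disjoint supports, and at `t = 0` the decay `2^{-m²}` beats the growth `2^{mj}` of the
`j`-th derivative of `ψ(2ᵐ ·)`.
-/

open Function

section CurveCalculus

variable {E : Type*} [AddCommGroup E] [Module ℝ E] [TopologicalSpace E]

theorem CurveDerivAt.congr_of_eventuallyEq {c₁ c₂ : ℝ → E} {v : E} {t : ℝ}
    (hd : CurveDerivAt c₁ v t) (h : c₁ =ᶠ[𝓝 t] c₂) : CurveDerivAt c₂ v t := by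
  have h' : ∀ᶠ u in 𝓝[≠] (0 : ℝ), c₁ (t + u) = c₂ (t + u) :=
    nhdsWithin_le_nhds (((continuous_const_add t).tendsto' 0 t (add_zero t)).eventually h)
  refine Tendsto.congr' ?_ hd
  filter_upwards [h'] with u hu
  rw [hu, h.eq_of_nhds]

theorem CurveDerivAt.hasDerivAt_comp {c : ℝ → E} {v : E} {t : ℝ} (h : CurveDerivAt c v t)
    (f : StrongDual ℝ E) : HasDerivAt (f ∘ c) (f v) t := by
  rw [hasDerivAt_iff_tendsto_slope_zero]
  refine ((f.continuous.tendsto v).comp h).congr fun u => ?_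
  simp only [comp_apply, map_smul, map_sub, smul_eq_mul]

variable [ContinuousSMul ℝ E]

theorem curveDerivAt_const_add_smul {F : ℝ → ℝ} {F' t : ℝ} (hF : HasDerivAt F F' t) (x v : E) :
    CurveDerivAt (fun s => x + F s • v) (F' • v) t := by
  refine ((hasDerivAt_iff_tendsto_slope_zero.mp hF).smul_const v).congr fun u => ?_
  simp only [smul_eq_mul, add_sub_add_left_eq_sub, ← sub_smul, smul_smul]

variable [ContinuousAdd E]

theorem CurveDerivAt.continuousAt {c : ℝ → E} {v : E} {t : ℝ} (h : CurveDerivAt c v t) :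
    ContinuousAt c t := by
  have hsub : Tendsto (fun u : ℝ => c (t + u) - c t) (𝓝[≠] 0) (𝓝 0) := by
    have := (tendsto_id.mono_left nhdsWithin_le_nhds : Tendsto id (𝓝[≠] (0 : ℝ)) (𝓝 0)).smul h
    rw [zero_smul] at this
    refine this.congr' ?_
    filter_upwards [self_mem_nhdsWithin] with u (hu : u ≠ 0)
    simp [smul_smul, hu]
  rw [← continuousWithinAt_compl_self, ContinuousWithinAt, ← add_zero t, ← map_add_left_nhdsNE,
    tendsto_map'_iff, add_zero]
  simpa [comp_def] using hsub.add_const (c t)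

theorem isSmoothCurve_of_forall_curveDerivAt {D : ℕ → ℝ → E}
    (hD : ∀ n t, CurveDerivAt (D n) (D (n + 1) t) t) : IsSmoothCurve (D 0) :=
  ⟨D, rfl, hD, fun n => continuous_iff_continuousAt.2 fun t => (hD n t).continuousAt⟩

end CurveCalculus

section Bounded

variable {E : Type*} [AddCommGroup E] [Module ℝ E] [TopologicalSpace E]

theorem Bornology.IsVonNBounded.absConvexHull [ContinuousSMul ℝ E] [LocallyConvexSpace ℝ E]
    {A : Set E} (hA : IsVonNBounded ℝ A) : IsVonNBounded ℝ (absConvexHull ℝ A) := by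
  intro V hV
  obtain ⟨W, ⟨hW, hWabs⟩, hWV⟩ := (nhds_hasBasis_absConvex ℝ E).mem_iff.mp hV
  filter_upwards [hA hW] with r hr
  exact (absConvexHull_min hr ⟨hWabs.1.smul r, hWabs.2.smul r⟩).trans (smul_set_mono hWV)

theorem exists_tsum_eq_of_support_subsingleton {α M : Type*} [Nonempty α] [AddCommMonoid M]
    [TopologicalSpace M] {g : α → M} (hg : (support g).Subsingleton) : ∃ i, ∑' k, g k = g i := by
  rcases hg.eq_empty_or_singleton with h | ⟨i, hi⟩
  · obtain ⟨i⟩ := ‹Nonempty α›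
    simp [support_eq_empty_iff.mp h]
  · refine ⟨i, tsum_eq_single i fun k hk => ?_⟩
    rw [← notMem_support, hi]
    exact hk

theorem tendsto_tsum_smul_zero {ι : Type*} {l : Filter ι} {B : Set E} (hB : IsVonNBounded ℝ B)
    {b : ℕ → E} (hb : ∀ i, b i ∈ B) {f : ι → ℕ → ℝ} (hf : ∀ s, (support (f s)).Subsingleton)
    {ε : ι → ℝ} (hε : Tendsto ε l (𝓝 0)) (hfε : ∀ᶠ s in l, ∀ i, |f s i| ≤ ε s) :
    Tendsto (fun s => ∑' i, f s i • b i) l (𝓝 0) := by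
  choose i hi using fun s => exists_tsum_eq_of_support_subsingleton
    ((hf s).anti (support_smul_subset_left (f s) b))
  refine Tendsto.congr (fun s => (hi s).symm) ?_
  exact hB.smul_tendsto_zero (ε := fun s => f s (i s)) (.of_forall fun s => hb (i s))
    (squeeze_zero_norm' (hfε.mono fun s hs => hs (i s)) hε)

end Bounded

section DyadicBumps

noncomputable def bumpProfile : ContDiffBump (3 / 2 : ℝ) := ⟨1 / 8, 1 / 4, by norm_num, by norm_num⟩

theorem iteratedDeriv_bumpProfile_eq_zero (j : ℕ) {t : ℝ} (ht : t ∉ Icc (5 / 4 : ℝ) (7 / 4)) :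
    iteratedDeriv j bumpProfile t = 0 := by
  by_contra h
  apply ht
  have := support_iteratedFDeriv_subset (𝕜 := ℝ) (f := ⇑bumpProfile) j (show t ∈ support _ from
    fun h0 => h (by rw [iteratedDeriv_eq_iteratedFDeriv, h0]; rfl))
  rw [bumpProfile.tsupport_eq, Real.closedBall_eq_Icc] at this
  convert this using 2 <;> norm_num [bumpProfile]

theorem exists_abs_iteratedDeriv_bumpProfile_le (j : ℕ) :
    ∃ C, ∀ t, |iteratedDeriv j bumpProfile t| ≤ C :=
  (bumpProfile.contDiff.continuous_iteratedDeriv' j).bounded_above_of_compact_support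
    (HasCompactSupport.intro isCompact_Icc fun _ ht => iteratedDeriv_bumpProfile_eq_zero j ht)

noncomputable def dyadicBumpDeriv (j m : ℕ) (t : ℝ) : ℝ :=
  ((2 : ℝ) ^ m) ^ j * iteratedDeriv j bumpProfile (2 ^ m * t)

theorem hasDerivAt_dyadicBumpDeriv (j m : ℕ) (t : ℝ) :
    HasDerivAt (dyadicBumpDeriv j m) (dyadicBumpDeriv (j + 1) m t) t := by
  have hψ : HasDerivAt (iteratedDeriv j bumpProfile)
      (iteratedDeriv (j + 1) bumpProfile (2 ^ m * t)) (2 ^ m * t) := by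
    rw [iteratedDeriv_succ]
    exact (bumpProfile.contDiff.differentiable_iteratedDeriv' j _).hasDerivAt
  have := (hψ.comp t ((hasDerivAt_id t).const_mul ((2 : ℝ) ^ m))).const_mul (((2 : ℝ) ^ m) ^ j)
  exact this.congr_deriv (by simp only [dyadicBumpDeriv, pow_succ]; ring)

theorem dyadicBumpDeriv_eq_zero {j m : ℕ} {t : ℝ}
    (h : (2 : ℝ) ^ m * t ∉ Icc (5 / 4 : ℝ) (7 / 4)) : dyadicBumpDeriv j m t = 0 := by
  rw [dyadicBumpDeriv, iteratedDeriv_bumpProfile_eq_zero j h, mul_zero]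

theorem subsingleton_setOf_two_pow_mul_mem_Icc (t : ℝ) :
    {i : ℕ | (2 : ℝ) ^ i * t ∈ Icc (5 / 4 : ℝ) (7 / 4)}.Subsingleton := by
  intro i hi k hk
  wlog hik : i < k generalizing i k
  · rcases (not_lt.1 hik).eq_or_lt with h | h
    · exact h.symm
    · exact (this hk hi h).symm
  simp only [mem_ofPred_eq, mem_Icc] at hi hk
  have ht : 0 < t := pos_of_mul_pos_right (a := (2 : ℝ) ^ _) (by linarith) (by positivity)
  -- `2 ^ k * t ≥ 2 * (2 ^ i * t) ≥ 2 * 5/4 > 7/4`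
  have := mul_le_mul_of_nonneg_right (pow_le_pow_right₀ one_le_two hik : (2 : ℝ) ^ (i + 1) ≤ 2 ^ k)
    ht.le
  rw [pow_succ] at this
  linarith

theorem support_dyadicBumpDeriv_subsingleton (j : ℕ) (t : ℝ) :
    (support fun m => dyadicBumpDeriv j m t).Subsingleton :=
  (subsingleton_setOf_two_pow_mul_mem_Icc t).anti fun _ hm =>
    by_contra fun h => hm (dyadicBumpDeriv_eq_zero h)

theorem exists_eventually_two_pow_mul_notMem_Icc {t₀ : ℝ} (ht₀ : t₀ ≠ 0) :
    ∃ m : ℕ, ∀ᶠ t in 𝓝 t₀, ∀ i ≠ m, (2 : ℝ) ^ i * t ∉ Icc (5 / 4 : ℝ) (7 / 4) := by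
  rcases ht₀.lt_or_gt with hneg | hpos
  · refine ⟨0, ?_⟩
    filter_upwards [Iio_mem_nhds hneg] with t (ht : t < 0) i _ hi
    nlinarith [hi.1, pow_pos (two_pos : (0 : ℝ) < 2) i]
  rcases le_or_gt t₀ 2 with hle | hgt
  · obtain ⟨m, hm1, hm2⟩ := exists_nat_pow_near (x := 2 / t₀) (y := 2)
      (by rw [le_div_iff₀ hpos]; linarith) one_lt_two
    rw [le_div_iff₀ hpos] at hm1
    rw [div_lt_iff₀ hpos, pow_succ] at hm2
    -- `2 ^ m * t₀ ∈ (1, 2]`, and on the window `2 ^ m * t ∈ (7/8, 5/2)` only the `m`-th term lives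
    refine ⟨m, ?_⟩
    have hwin : ∀ᶠ t in 𝓝 t₀, (2 : ℝ) ^ m * t ∈ Ioo (7 / 8 : ℝ) (5 / 2) :=
      (continuous_const.mul continuous_id).continuousAt.preimage_mem_nhds
        (Ioo_mem_nhds (by simp; linarith) (by simp; linarith))
    filter_upwards [hwin] with t ⟨h1, h2⟩ i hi hmem
    have ht : 0 < t := pos_of_mul_pos_right (a := (2 : ℝ) ^ _) (by linarith) (by positivity)
    rcases hi.lt_or_gt with hlt | hgt
    · have := mul_le_mul_of_nonneg_right
        (pow_le_pow_right₀ one_le_two hlt : (2 : ℝ) ^ (i + 1) ≤ 2 ^ m) ht.le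
      rw [pow_succ] at this
      linarith [hmem.1]
    · have := mul_le_mul_of_nonneg_right
        (pow_le_pow_right₀ one_le_two hgt : (2 : ℝ) ^ (m + 1) ≤ 2 ^ i) ht.le
      rw [pow_succ] at this
      linarith [hmem.2]
  · refine ⟨0, ?_⟩
    filter_upwards [Ioi_mem_nhds (by linarith : (7 / 4 : ℝ) < t₀)] with t (ht : 7 / 4 < t) i _ hi
    nlinarith [hi.2, one_le_pow₀ (one_le_two : (1 : ℝ) ≤ 2) (n := i)]

theorem abs_inv_mul_dyadicBumpDeriv_le {j i : ℕ} {C a h : ℝ}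
    (hC : ∀ t, |iteratedDeriv j bumpProfile t| ≤ C) (ha : |a| ≤ (((2 : ℝ) ^ i) ^ i)⁻¹)
    (hh : |h| ≤ ((2 : ℝ) ^ (j + 2))⁻¹) : |h⁻¹ * (a * dyadicBumpDeriv j i h)| ≤ C * |h| := by
  have hC0 : 0 ≤ C := (abs_nonneg _).trans (hC 0)
  by_cases hi : (2 : ℝ) ^ i * h ∈ Icc (5 / 4 : ℝ) (7 / 4)
  swap
  · rw [dyadicBumpDeriv_eq_zero hi]
    simpa using mul_nonneg hC0 (abs_nonneg h)
  set q : ℝ := 2 ^ i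
  have hq : 1 ≤ q := one_le_pow₀ one_le_two
  have hqh : 1 ≤ q * h := by linarith [hi.1]
  have hh0 : 0 < h := pos_of_mul_pos_right (a := (2 : ℝ) ^ _) (by linarith) (by positivity)
  have hqinv : q⁻¹ ≤ h := (inv_le_iff_one_le_mul₀' (by positivity)).2 hqh
  rw [abs_of_pos hh0] at hh ⊢
  -- `2 ^ (j + 2) * h ≤ 1 < 2 ^ i * h` forces `j + 2 < i`
  have hji : j + 2 ≤ i := by
    have : (2 : ℝ) ^ (j + 2) * h ≤ 1 :=
      calc _ ≤ (2 : ℝ) ^ (j + 2) * ((2 : ℝ) ^ (j + 2))⁻¹ := by gcongr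
        _ = 1 := mul_inv_cancel₀ (by positivity)
    have : (2 : ℝ) ^ (j + 2) < 2 ^ i := lt_of_mul_lt_mul_right (by linarith [hi.1]) hh0.le
    exact ((pow_lt_pow_iff_right₀ one_lt_two).1 this).le
  calc |h⁻¹ * (a * dyadicBumpDeriv j i h)|
      = h⁻¹ * |a| * q ^ j * |iteratedDeriv j bumpProfile (q * h)| := by
        rw [dyadicBumpDeriv, abs_mul, abs_mul, abs_mul, abs_inv, abs_of_pos hh0,
          abs_of_pos (by positivity : (0 : ℝ) < q ^ j)]
        ring
    _ ≤ q * (q ^ (j + 2))⁻¹ * q ^ j * C := by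
        gcongr
        · exact inv_le_of_inv_le₀ (by positivity) hqinv
        · exact ha.trans (inv_anti₀ (by positivity) (pow_le_pow_right₀ hq hji))
        · exact hC _
    _ = C * q⁻¹ := by field_simp; ring
    _ ≤ C * h := by gcongr

end DyadicBumps

section BumpSeries

variable {E : Type*} [AddCommGroup E] [Module ℝ E] [TopologicalSpace E]

-- The `j`-th derivative of the curve `t ↦ x + ∑ₘ aₘ ψ(2ᵐ t) bₘ`, with `ψ = bumpProfile`.
noncomputable def bumpSeries (x : E) (a : ℕ → ℝ) (b : ℕ → E) (j : ℕ) (t : ℝ) : E :=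
  (if j = 0 then x else 0) + ∑' m, (a m * dyadicBumpDeriv j m t) • b m

variable (x : E) (a : ℕ → ℝ) (b : ℕ → E)

theorem bumpSeries_apply_zero (j : ℕ) : bumpSeries x a b j 0 = if j = 0 then x else 0 := by
  have : ∀ m, dyadicBumpDeriv j m 0 = 0 := fun m => dyadicBumpDeriv_eq_zero (by norm_num)
  simp [bumpSeries, this]

theorem bumpSeries_dyadic (m : ℕ) :
    bumpSeries x a b 0 (3 / 2 * ((2 : ℝ) ^ m)⁻¹) = x + a m • b m := by
  set t : ℝ := 3 / 2 * ((2 : ℝ) ^ m)⁻¹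
  have hm : dyadicBumpDeriv 0 m t = 1 := by
    have : (2 : ℝ) ^ m * t = 3 / 2 := by simp only [t]; field_simp
    rw [dyadicBumpDeriv, this, iteratedDeriv_zero, pow_zero, one_mul]
    exact bumpProfile.one_of_mem_closedBall (Metric.mem_closedBall_self bumpProfile.rIn_pos.le)
  rw [bumpSeries, if_pos rfl, tsum_eq_single m, hm, mul_one]
  intro i hi
  have : dyadicBumpDeriv 0 i t = 0 := by
    by_contra h
    exact hi (support_dyadicBumpDeriv_subsingleton 0 t h (by simp [hm]))
  rw [this, mul_zero, zero_smul]

theorem exists_eventually_bumpSeries_eq {t₀ : ℝ} (ht₀ : t₀ ≠ 0) :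
    ∃ m, ∀ᶠ t in 𝓝 t₀, ∀ j,
      bumpSeries x a b j t = (if j = 0 then x else 0) + (a m * dyadicBumpDeriv j m t) • b m := by
  obtain ⟨m, hm⟩ := exists_eventually_two_pow_mul_notMem_Icc ht₀
  refine ⟨m, hm.mono fun t ht j => ?_⟩
  rw [bumpSeries, tsum_eq_single m fun i hi => by
    rw [dyadicBumpDeriv_eq_zero (ht i hi), mul_zero, zero_smul]]

variable [ContinuousSMul ℝ E]

theorem curveDerivAt_bumpSeries_of_ne_zero (j : ℕ) {t₀ : ℝ} (ht₀ : t₀ ≠ 0) :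
    CurveDerivAt (bumpSeries x a b j) (bumpSeries x a b (j + 1) t₀) t₀ := by
  obtain ⟨m, hm⟩ := exists_eventually_bumpSeries_eq x a b ht₀
  rw [hm.self_of_nhds (j + 1), if_neg j.succ_ne_zero, zero_add]
  exact (curveDerivAt_const_add_smul ((hasDerivAt_dyadicBumpDeriv j m t₀).const_mul (a m)) _ _)
    |>.congr_of_eventuallyEq (hm.mono fun t ht => (ht j).symm)

variable [T2Space E] {B : Set E}

theorem curveDerivAt_bumpSeries_zero (hB : IsVonNBounded ℝ B) (hb : ∀ m, b m ∈ B)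
    (ha : ∀ m, |a m| ≤ (((2 : ℝ) ^ m) ^ m)⁻¹) (j : ℕ) :
    CurveDerivAt (bumpSeries x a b j) (bumpSeries x a b (j + 1) 0) 0 := by
  obtain ⟨C, hC⟩ := exists_abs_iteratedDeriv_bumpProfile_le j
  have hquot : ∀ h : ℝ, h⁻¹ • (bumpSeries x a b j (0 + h) - bumpSeries x a b j 0) =
      ∑' m, (h⁻¹ * (a m * dyadicBumpDeriv j m h)) • b m := by
    intro h
    rw [zero_add, bumpSeries, bumpSeries_apply_zero, add_sub_cancel_left, ← tsum_const_smul'']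
    simp only [smul_smul]
  rw [bumpSeries_apply_zero, if_neg j.succ_ne_zero]
  refine Tendsto.congr (fun h => (hquot h).symm) (tendsto_tsum_smul_zero hB hb
    (fun h => (support_dyadicBumpDeriv_subsingleton j h).anti fun m hm => ?_)
    (ε := fun h => C * |h|) ?_ ?_)
  · contrapose hm
    simp [notMem_support.mp hm]
  · exact ((continuous_const.mul continuous_abs).tendsto' 0 0 (by simp)).mono_left
      nhdsWithin_le_nhds
  · filter_upwards [nhdsWithin_le_nhds (Metric.closedBall_mem_nhds (0 : ℝ)
      (by positivity : (0 : ℝ) < ((2 : ℝ) ^ (j + 2))⁻¹))] with h hh m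
    exact abs_inv_mul_dyadicBumpDeriv_le hC (ha m) (by simpa using hh)

theorem isSmoothCurve_bumpSeries [ContinuousAdd E] (hB : IsVonNBounded ℝ B) (hb : ∀ m, b m ∈ B)
    (ha : ∀ m, |a m| ≤ (((2 : ℝ) ^ m) ^ m)⁻¹) : IsSmoothCurve (bumpSeries x a b 0) :=
  isSmoothCurve_of_forall_curveDerivAt fun j t => by
    rcases eq_or_ne t 0 with rfl | ht
    · exact curveDerivAt_bumpSeries_zero x a b hB hb ha j
    · exact curveDerivAt_bumpSeries_of_ne_zero x a b j ht

end BumpSeries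

section DifferenceQuotients

variable {E : Type*} [AddCommGroup E] [Module ℝ E] [TopologicalSpace E] [ContinuousSMul ℝ E]
  [LocallyConvexSpace ℝ E]

theorem LipschitzOnSet.mackeyConvSeq {c : ℝ → E} {J : Set ℝ} (hc : LipschitzOnSet c J)
    {s : ℕ → ℝ} {t₀ : ℝ} (hs : Tendsto s atTop (𝓝 t₀)) (hsJ : ∀ n, s n ∈ J) (ht₀ : t₀ ∈ J)
    (hne : ∀ n, s n ≠ t₀) : MackeyConvSeq (fun n => c (s n)) (c t₀) := by
  refine ⟨absConvexHull ℝ (DiffQuotients c J), ⟨convex_absConvexHull, balanced_absConvexHull⟩,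
    Bornology.IsVonNBounded.absConvexHull hc, fun n => s n - t₀, by simpa using hs.sub_const t₀,
    fun n => ?_⟩
  rw [← smul_inv_smul₀ (sub_ne_zero.2 (hne n)) (c (s n) - c t₀)]
  exact smul_mem_smul_set (subset_absConvexHull ⟨t₀, ht₀, s n, hsJ n, (hne n).symm, rfl⟩)

variable [IsTopologicalAddGroup E]

theorem smul_sub_mem_closure_convexHull {c D : ℝ → E} (hD : ∀ t, CurveDerivAt c (D t) t)
    {t₁ t₂ : ℝ} (h : t₁ < t₂) :
    (t₂ - t₁)⁻¹ • (c t₂ - c t₁) ∈ closure (convexHull ℝ (D '' Icc t₁ t₂)) := by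
  by_contra hq
  obtain ⟨f, u, hfu, huq⟩ :=
    geometric_hahn_banach_closed_point (convex_convexHull ℝ _).closure isClosed_closure hq
  obtain ⟨ξ, hξ, hslope⟩ := exists_hasDerivAt_eq_slope (f ∘ c) (f ∘ D) h
    (continuous_iff_continuousAt.2 fun t => ((hD t).hasDerivAt_comp f).continuousAt).continuousOn
    fun t _ => (hD t).hasDerivAt_comp f
  have hξD := hfu _ (subset_closure (subset_convexHull ℝ _ ⟨ξ, Ioo_subset_Icc_self hξ, rfl⟩))
  rw [map_smul, map_sub, smul_eq_mul, ← div_eq_inv_mul] at huq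
  simp only [comp_apply] at hslope
  linarith

theorem lipschitzOnSet_Icc [T2Space E] {c D : ℝ → E} (hD : ∀ t, CurveDerivAt c (D t) t)
    (hDc : Continuous D) (a b : ℝ) : LipschitzOnSet c (Icc a b) := by
  have hK : IsVonNBounded ℝ (closure (convexHull ℝ (D '' Icc a b))) :=
    (((isCompact_Icc.image hDc).isVonNBounded ℝ).absConvexHull.subset
      (convexHull_min subset_absConvexHull convex_absConvexHull)).closure
  have hmem : ∀ {s₁ s₂}, s₁ ∈ Icc a b → s₂ ∈ Icc a b → s₁ < s₂ →
      (s₂ - s₁)⁻¹ • (c s₂ - c s₁) ∈ closure (convexHull ℝ (D '' Icc a b)) := fun h₁ h₂ hlt =>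
    closure_mono (convexHull_mono (image_mono (Icc_subset_Icc h₁.1 h₂.2)))
      (smul_sub_mem_closure_convexHull hD hlt)
  refine hK.subset ?_
  rintro _ ⟨t₁, ht₁, t₂, ht₂, hne, rfl⟩
  rcases hne.lt_or_gt with hlt | hgt
  · exact hmem ht₁ ht₂ hlt
  · convert hmem ht₂ ht₁ hgt using 1
    rw [← neg_sub t₁, ← neg_sub (c t₁), inv_neg, neg_smul_neg]

end DifferenceQuotients

section MackeyClosureTopology

variable {E : Type*} [AddCommGroup E] [Module ℝ E] [TopologicalSpace E]

theorem isOpen_cInfTopology_iff {U : Set E} :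
    IsOpen[cInfTopology E] U ↔ ∀ c : ℝ → E, IsSmoothCurve c → IsOpen (c ⁻¹' U) := by
  rw [cInfTopology, isOpen_iSup_iff]
  simp only [isOpen_coinduced, Subtype.forall]

variable [IsTopologicalAddGroup E] [ContinuousSMul ℝ E] [T2Space E] {U : Set E}

theorem eventually_mem_of_mackeyConvSeq (hU : ∀ c : ℝ → E, IsSmoothCurve c → IsOpen (c ⁻¹' U))
    {x : E} (hx : x ∈ U) {y : ℕ → E} (hy : MackeyConvSeq y x) : ∃ N, ∀ n ≥ N, y n ∈ U := by
  by_contra! hfreq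
  obtain ⟨B, -, hB, μ, hμ, hyB⟩ := hy
  have hsub : ∀ m : ℕ, ∃ n, |μ n| ≤ (((2 : ℝ) ^ m) ^ m)⁻¹ ∧ y n ∉ U := fun m =>
    have hsmall := hμ.eventually
      (Metric.closedBall_mem_nhds (0 : ℝ) (ε := (((2 : ℝ) ^ m) ^ m)⁻¹) (by positivity))
    (hsmall.and_frequently (frequently_atTop.2 hfreq)).exists.imp fun n hn =>
      ⟨by simpa using hn.1, hn.2⟩
  choose k hkμ hkU using hsub
  choose b hbB hb using fun m => hyB (k m)
  set c := bumpSeries x (μ ∘ k) b 0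
  have hc : IsSmoothCurve c := isSmoothCurve_bumpSeries x (μ ∘ k) b hB hbB hkμ
  have ht : Tendsto (fun m : ℕ => 3 / 2 * ((2 : ℝ) ^ m)⁻¹) atTop (𝓝 0) := by
    simpa using (tendsto_inv_atTop_zero.comp
      (tendsto_pow_atTop_atTop_of_one_lt one_lt_two)).const_mul (3 / 2 : ℝ)
  have h0 : (0 : ℝ) ∈ c ⁻¹' U := by simpa [c, bumpSeries_apply_zero] using hx
  obtain ⟨m, hm⟩ := (ht.eventually ((hU c hc).mem_nhds h0)).exists
  apply hkU m
  simpa [c, bumpSeries_dyadic, hb] using hm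

theorem isOpen_preimage_of_forall_mackeyConvSeq [LocallyConvexSpace ℝ E]
    (hU : ∀ x ∈ U, ∀ y : ℕ → E, MackeyConvSeq y x → ∃ N : ℕ, ∀ n ≥ N, y n ∈ U)
    {c : ℝ → E} (hc : IsSmoothCurve c) : IsOpen (c ⁻¹' U) := by
  obtain ⟨D, rfl, hD, hDc⟩ := hc
  rw [← isClosed_compl_iff, ← isSeqClosed_iff_isClosed]
  rintro s t₀ hs hst₀ (ht₀ : D 0 t₀ ∈ U)
  obtain ⟨N, hN⟩ := eventually_atTop.1
    (hst₀.eventually (Icc_mem_nhds (sub_one_lt t₀) (lt_add_one t₀)))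
  have hmackey := (lipschitzOnSet_Icc (hD 0) (hDc 1) (t₀ - 1) (t₀ + 1)).mackeyConvSeq
    ((tendsto_add_atTop_iff_nat N).2 hst₀) (fun n => hN _ (Nat.le_add_left N n))
    ⟨by linarith, by linarith⟩ fun n h => hs (n + N) (h ▸ ht₀)
  obtain ⟨M, hM⟩ := hU _ ht₀ _ hmackey
  exact hs (M + N) (hM M le_rfl)

end MackeyClosureTopology

theorem cInf_open_iff {E : Type*} [AddCommGroup E] [Module ℝ E] [TopologicalSpace E]
    [IsTopologicalAddGroup E] [ContinuousSMul ℝ E] [LocallyConvexSpace ℝ E] [T2Space E] (U : Set E) :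
    @IsOpen E (cInfTopology E) U ↔
      ∀ x ∈ U, ∀ y : ℕ → E, MackeyConvSeq y x → ∃ N : ℕ, ∀ n ≥ N, y n ∈ U := by
  rw [isOpen_cInfTopology_iff]
  exact ⟨fun hU _ hx _ hy => eventually_mem_of_mackeyConvSeq hU hx hy,
    fun hU _ hc => isOpen_preimage_of_forall_mackeyConvSeq hU hc⟩
end

section
/- Let E be a locally convex space and U an absolutely convex subset of E containing 0 which is open in the Mackey-closure (c^∞) topology. Then U absorbs every bounded subset of E, i.e., for every bounded B ⊆ E there exists λ > 0 with B ⊆ λU. -/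
/-! If `U` absorbed `B` by no factor, pick `bₙ ∈ B` with `bₙ ∉ 2^{n²} U`. Rescaled copies of a bump
function with disjoint supports around `2⁻ⁿ` glue the points `2^{-n²} bₙ` into one curve `c` with
`c (2⁻ⁿ) = 2^{-n²} bₙ`. The superexponential factor `2^{-n²}` beats the growth `2^{nk}` of the
`k`-th derivatives of the bumps, and boundedness of `B` turns this into continuity of all
derivatives at `0`, so `c` is smooth. Since `U` is `c^∞`-open, `c⁻¹(U)` is a neighbourhood of `0`,
so `c (2⁻ⁿ) ∈ U` for large `n`: a contradiction. -/

open Filter Topology Set Bornology Pointwise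

universe u v

open scoped ContDiff

noncomputable section

def unitBump : ContDiffBump (0 : ℝ) := ⟨1 / 2, 1, by norm_num, by norm_num⟩

def bumpDeriv (k : ℕ) : ℝ → ℝ := deriv^[k] unitBump

lemma contDiff_bumpDeriv (k : ℕ) : ContDiff ℝ ∞ (bumpDeriv k) :=
  ContDiff.iterate_deriv k unitBump.contDiff

lemma bumpDeriv_succ (k : ℕ) : bumpDeriv (k + 1) = deriv (bumpDeriv k) :=
  Function.iterate_succ_apply' _ _ _

lemma hasDerivAt_bumpDeriv (k : ℕ) (x : ℝ) :
    HasDerivAt (bumpDeriv k) (bumpDeriv (k + 1) x) x := by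
  rw [bumpDeriv_succ]
  exact ((contDiff_bumpDeriv k).differentiable (by simp) x).hasDerivAt

lemma bumpDeriv_zero_zero : bumpDeriv 0 0 = 1 :=
  unitBump.one_of_mem_closedBall (by simp [unitBump])

lemma tsupport_bumpDeriv_subset (k : ℕ) : tsupport (bumpDeriv k) ⊆ Metric.closedBall 0 1 := by
  induction k with
  | zero =>
    rw [bumpDeriv, Function.iterate_zero_apply, unitBump.tsupport_eq]
    simp [unitBump]
  | succ k ih =>
    rw [bumpDeriv_succ]
    exact tsupport_deriv_subset.trans ih

lemma abs_le_one_of_bumpDeriv_ne_zero {k : ℕ} {x : ℝ} (hx : bumpDeriv k x ≠ 0) : |x| ≤ 1 := by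
  simpa using tsupport_bumpDeriv_subset k (subset_tsupport _ hx)

lemma exists_abs_bumpDeriv_le (k : ℕ) : ∃ C, ∀ x, |bumpDeriv k x| ≤ C :=
  HasCompactSupport.exists_bound_of_continuous
    (.of_isClosed_subset (isCompact_closedBall 0 1) (isClosed_tsupport _)
      (tsupport_bumpDeriv_subset k))
    (contDiff_bumpDeriv k).continuous

/-- The `k`-th derivative of `t ↦ unitBump (4 * 2 ^ n * t - 4)`, which is supported in the window
`[3/4, 5/4] * 2⁻ⁿ`. -/
def windowCoeff (k n : ℕ) (t : ℝ) : ℝ := (4 * 2 ^ n) ^ k * bumpDeriv k (4 * 2 ^ n * t - 4)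

lemma continuous_windowCoeff (k n : ℕ) : Continuous (windowCoeff k n) :=
  continuous_const.mul ((contDiff_bumpDeriv k).continuous.comp (by fun_prop))

lemma hasDerivAt_windowCoeff (k n : ℕ) (t : ℝ) :
    HasDerivAt (windowCoeff k n) (windowCoeff (k + 1) n t) t := by
  have hlin : HasDerivAt (fun t : ℝ => 4 * 2 ^ n * t - 4) (4 * 2 ^ n) t := by
    simpa using ((hasDerivAt_id t).const_mul (4 * 2 ^ n : ℝ)).sub_const 4
  refine (((hasDerivAt_bumpDeriv k _).comp t hlin).const_mul ((4 * 2 ^ n : ℝ) ^ k)).congr_deriv ?_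
  simp only [windowCoeff]
  ring

lemma mem_window_of_windowCoeff_ne_zero {k n : ℕ} {t : ℝ} (h : windowCoeff k n t ≠ 0) :
    3 ≤ 4 * 2 ^ n * t ∧ 4 * 2 ^ n * t ≤ 5 := by
  have := abs_le.1 (abs_le_one_of_bumpDeriv_ne_zero (right_ne_zero_of_mul h))
  constructor <;> linarith

lemma windowCoeff_of_nonpos (k n : ℕ) {t : ℝ} (ht : t ≤ 0) : windowCoeff k n t = 0 := by
  by_contra h
  have := (mem_window_of_windowCoeff_ne_zero h).1
  nlinarith [pow_pos (two_pos : (0 : ℝ) < 2) n]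

lemma windowCoeff_eq_zero_of_lt {k i j : ℕ} {t : ℝ} (hij : i < j) (hi : windowCoeff k i t ≠ 0) :
    windowCoeff k j t = 0 := by
  by_contra hj
  have ht : 0 < t := lt_of_not_ge fun ht => hi (windowCoeff_of_nonpos k i ht)
  have h2 : (2 : ℝ) * 2 ^ i ≤ 2 ^ j := by
    rw [← pow_succ']; exact pow_le_pow_right₀ one_le_two hij
  nlinarith [(mem_window_of_windowCoeff_ne_zero hi).1, (mem_window_of_windowCoeff_ne_zero hj).2]

lemma eq_of_windowCoeff_ne_zero {k m n : ℕ} {t : ℝ} (hm : windowCoeff k m t ≠ 0)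
    (hn : windowCoeff k n t ≠ 0) : m = n := by
  rcases lt_trichotomy m n with h | h | h
  · exact absurd (windowCoeff_eq_zero_of_lt h hm) hn
  · exact h
  · exact absurd (windowCoeff_eq_zero_of_lt h hn) hm

lemma exists_forall_ne_windowCoeff_eq_zero (k : ℕ) (t : ℝ) :
    ∃ n, ∀ m ≠ n, windowCoeff k m t = 0 := by
  by_cases h : ∀ n, windowCoeff k n t = 0
  · exact ⟨0, fun m _ => h m⟩
  · obtain ⟨n, hn⟩ := not_forall.1 h
    exact ⟨n, fun m hmn => by_contra fun hm => hmn (eq_of_windowCoeff_ne_zero hm hn)⟩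

lemma windowCoeff_zero_inv_two_pow (n : ℕ) : windowCoeff 0 n (2 ^ n)⁻¹ = 1 := by
  rw [windowCoeff, pow_zero, one_mul, mul_assoc, mul_inv_cancel₀ (by positivity), mul_one,
    sub_self, bumpDeriv_zero_zero]

lemma eventually_windowCoeff_eq_zero {t₀ : ℝ} (ht₀ : t₀ ≠ 0) :
    ∃ M : ℕ, ∀ᶠ t in 𝓝 t₀, ∀ k n, M ≤ n → windowCoeff k n t = 0 := by
  have hpos : 0 < |t₀| := abs_pos.2 ht₀
  refine ⟨⌈5 / (2 * |t₀|)⌉₊, ?_⟩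
  have hnear : ∀ᶠ t in 𝓝 t₀, |t₀| / 2 < |t| :=
    continuousAt_const.eventually_lt continuous_abs.continuousAt (by linarith)
  filter_upwards [hnear] with t ht k n hn
  rcases le_or_gt t 0 with ht0 | ht0
  · exact windowCoeff_of_nonpos k n ht0
  by_contra h
  rw [abs_of_pos ht0] at ht
  have hM : 5 / (2 * |t₀|) < 2 ^ n :=
    (Nat.ceil_le.1 hn).trans_lt (by exact_mod_cast Nat.lt_two_pow_self)
  rw [div_lt_iff₀ (by positivity)] at hM
  nlinarith [(mem_window_of_windowCoeff_ne_zero h).2, pow_pos (two_pos : (0 : ℝ) < 2) n]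

def fastDecay (n : ℕ) : ℝ := ((2 : ℝ) ^ (n * n))⁻¹

lemma fastDecay_pos (n : ℕ) : 0 < fastDecay n := by
  rw [fastDecay]; positivity

lemma tendsto_pow_mul_fastDecay (j : ℕ) :
    Tendsto (fun n : ℕ => (4 * 2 ^ n : ℝ) ^ j * fastDecay n) atTop (𝓝 0) := by
  have hgeom : Tendsto (fun n : ℕ => (4 : ℝ) ^ j * (2⁻¹) ^ n) atTop (𝓝 0) := by
    simpa using (tendsto_pow_atTop_nhds_zero_of_lt_one (by norm_num : (0 : ℝ) ≤ 2⁻¹)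
      (by norm_num)).const_mul ((4 : ℝ) ^ j)
  refine squeeze_zero' (.of_forall fun n => mul_nonneg (by positivity) (fastDecay_pos n).le) ?_
    hgeom
  filter_upwards [eventually_ge_atTop (j + 1)] with n hn
  have hexp : n * j + n ≤ n * n := by nlinarith
  calc (4 * 2 ^ n : ℝ) ^ j * fastDecay n
      = (4 : ℝ) ^ j * (2 ^ (n * j + n) / 2 ^ (n * n)) * (2⁻¹) ^ n := by
        rw [fastDecay, pow_add, mul_pow, ← pow_mul, inv_pow]
        field_simp
    _ ≤ (4 : ℝ) ^ j * 1 * (2⁻¹) ^ n := by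
        gcongr
        exact div_le_one_of_le₀ (pow_le_pow_right₀ one_le_two hexp) (by positivity)
    _ = (4 : ℝ) ^ j * (2⁻¹) ^ n := by ring

/-- On the `n`-th window `t⁻¹ ≤ 4 * 2ⁿ`, and only large `n` meet small `t`, so `fastDecay n` beats
`t⁻¹` together with the factor `(4 * 2ⁿ) ^ k` from the chain rule. -/
lemma tendsto_inv_mul_windowCoeff_mul_fastDecay (k : ℕ) (ν : ℝ → ℕ) :
    Tendsto (fun t => t⁻¹ * windowCoeff k (ν t) t * fastDecay (ν t)) (𝓝 0) (𝓝 0) := by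
  obtain ⟨C, hC⟩ := exists_abs_bumpDeriv_le k
  rw [Metric.tendsto_nhds]
  intro ε hε
  obtain ⟨N, hN⟩ := eventually_atTop.1
    (((tendsto_pow_mul_fastDecay (k + 1)).const_mul C).eventually (gt_mem_nhds (by simpa)))
  filter_upwards [Iio_mem_nhds (by positivity : (0 : ℝ) < 3 / (4 * 2 ^ N))] with t ht
  generalize ν t = n
  rw [Real.dist_eq, sub_zero]
  by_cases hg : windowCoeff k n t = 0
  · simpa [hg] using hε
  obtain ⟨h3, -⟩ := mem_window_of_windowCoeff_ne_zero hg
  have ht0 : 0 < t := by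
    by_contra! ht0; exact hg (windowCoeff_of_nonpos k n ht0)
  have hNn : N ≤ n := by
    by_contra! hn
    have : (2 : ℝ) ^ n ≤ 2 ^ N := pow_le_pow_right₀ one_le_two hn.le
    rw [mem_Iio, lt_div_iff₀ (by positivity)] at ht
    nlinarith
  have hinv : t⁻¹ ≤ 4 * 2 ^ n := by
    rw [inv_le_iff_one_le_mul₀ ht0]; linarith
  have hcoeff : |windowCoeff k n t| ≤ (4 * 2 ^ n) ^ k * C := by
    rw [windowCoeff, abs_mul, abs_of_pos (by positivity)]
    exact mul_le_mul_of_nonneg_left (hC _) (by positivity)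
  calc |t⁻¹ * windowCoeff k n t * fastDecay n|
      = t⁻¹ * |windowCoeff k n t| * fastDecay n := by
        rw [abs_mul, abs_mul, abs_of_pos (inv_pos.2 ht0), abs_of_pos (fastDecay_pos n)]
    _ ≤ (4 * 2 ^ n) * ((4 * 2 ^ n) ^ k * C) * fastDecay n :=
        mul_le_mul_of_nonneg_right (mul_le_mul hinv hcoeff (abs_nonneg _) (by positivity))
          (fastDecay_pos n).le
    _ = C * ((4 * 2 ^ n) ^ (k + 1) * fastDecay n) := by ring
    _ < ε := hN n hNn

variable {E : Type*} [AddCommGroup E] [Module ℝ E]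

/-- `windowCurve y 0` passes through `y n` at time `2⁻ⁿ`, and `windowCurve y k` is its `k`-th
derivative. -/
def windowCurve (y : ℕ → E) (k : ℕ) (t : ℝ) : E := ∑ᶠ n, windowCoeff k n t • y n

lemma exists_windowCurve_eq_smul (y : ℕ → E) (k : ℕ) (t : ℝ) :
    ∃ n, windowCurve y k t = windowCoeff k n t • y n := by
  obtain ⟨n, hn⟩ := exists_forall_ne_windowCoeff_eq_zero k t
  exact ⟨n, finsum_eq_single _ n fun m hm => by rw [hn m hm, zero_smul]⟩

lemma windowCurve_zero (y : ℕ → E) (k : ℕ) : windowCurve y k 0 = 0 := by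
  simp [windowCurve, windowCoeff_of_nonpos k _ le_rfl]

lemma windowCurve_zero_inv_two_pow (y : ℕ → E) (n : ℕ) : windowCurve y 0 (2 ^ n)⁻¹ = y n := by
  rw [windowCurve, finsum_eq_single _ n, windowCoeff_zero_inv_two_pow, one_smul]
  intro m hm
  have hn : windowCoeff 0 n (2 ^ n)⁻¹ ≠ 0 := by simp [windowCoeff_zero_inv_two_pow]
  rw [not_not.1 fun h => hm (eq_of_windowCoeff_ne_zero h hn), zero_smul]

lemma eventually_windowCurve_eq_sum (y : ℕ → E) {t₀ : ℝ} (ht₀ : t₀ ≠ 0) :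
    ∃ M, ∀ k, windowCurve y k =ᶠ[𝓝 t₀] fun t => ∑ n ∈ Finset.range M, windowCoeff k n t • y n := by
  obtain ⟨M, hM⟩ := eventually_windowCoeff_eq_zero ht₀
  refine ⟨M, fun k => hM.mono fun t ht => finsum_eq_sum_of_support_subset _ fun n hn => ?_⟩
  exact Finset.mem_range.2 (not_le.1 fun hMn => hn (by simp only [ht k n hMn, zero_smul]))

variable [TopologicalSpace E]

lemma CurveDerivAt.congr_of_eventuallyEq_s15 {c d : ℝ → E} {v : E} {t : ℝ}
    (hc : CurveDerivAt c v t) (hdc : d =ᶠ[𝓝 t] c) : CurveDerivAt d v t := by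
  have hshift : ∀ᶠ h in 𝓝 (0 : ℝ), d (t + h) = c (t + h) :=
    ((continuous_const_add t).tendsto' 0 t (add_zero t)).eventually hdc
  refine Tendsto.congr' ?_ hc
  filter_upwards [nhdsWithin_le_nhds hshift] with h hh
  rw [hh, hdc.eq_of_nhds]

lemma HasDerivAt.curveDerivAt_smul_const [ContinuousSMul ℝ E] {f : ℝ → ℝ} {f' t : ℝ}
    (hf : HasDerivAt f f' t) (y : E) : CurveDerivAt (fun s => f s • y) (f' • y) t := by
  refine (hf.tendsto_slope_zero.smul_const y).congr fun h => ?_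
  dsimp only
  rw [← sub_smul, smul_smul, smul_eq_mul]

lemma CurveDerivAt.sum [ContinuousAdd E] {ι : Type*} {s : Finset ι} {c : ι → ℝ → E} {v : ι → E}
    {t : ℝ} (h : ∀ i ∈ s, CurveDerivAt (c i) (v i) t) :
    CurveDerivAt (fun τ => ∑ i ∈ s, c i τ) (∑ i ∈ s, v i) t := by
  refine (tendsto_finsetSum s h).congr fun h => ?_
  rw [← Finset.sum_sub_distrib, Finset.smul_sum]

lemma continuousAt_windowCurve [ContinuousAdd E] [ContinuousSMul ℝ E] (y : ℕ → E) (k : ℕ)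
    {t₀ : ℝ} (ht₀ : t₀ ≠ 0) :
    ContinuousAt (windowCurve y k) t₀ := by
  obtain ⟨M, hM⟩ := eventually_windowCurve_eq_sum y ht₀
  exact (continuous_finsetSum _ fun n _ =>
    (continuous_windowCoeff k n).smul continuous_const).continuousAt.congr (hM k).symm

lemma curveDerivAt_windowCurve [ContinuousAdd E] [ContinuousSMul ℝ E] (y : ℕ → E) (k : ℕ)
    {t₀ : ℝ} (ht₀ : t₀ ≠ 0) :
    CurveDerivAt (windowCurve y k) (windowCurve y (k + 1) t₀) t₀ := by
  obtain ⟨M, hM⟩ := eventually_windowCurve_eq_sum y ht₀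
  rw [(hM (k + 1)).eq_of_nhds]
  exact (CurveDerivAt.sum fun n _ => (hasDerivAt_windowCoeff k n t₀).curveDerivAt_smul_const
    (y n)).congr_of_eventuallyEq_s15 (hM k)

variable {B : Set E} {b : ℕ → E}

/-- Each value of the curve is one point of `B` scaled by a factor of order `o(t)`. -/
lemma tendsto_inv_smul_windowCurve (hB : IsVonNBounded ℝ B) (hb : ∀ n, b n ∈ B) (k : ℕ) :
    Tendsto (fun t => t⁻¹ • windowCurve (fun n => fastDecay n • b n) k t) (𝓝 0) (𝓝 0) := by
  choose ν hν using exists_windowCurve_eq_smul (fun n => fastDecay n • b n) k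
  refine (hB.smul_tendsto_zero (x := b ∘ ν) (.of_forall fun t => hb _)
    (tendsto_inv_mul_windowCoeff_mul_fastDecay k ν)).congr fun t => ?_
  rw [hν, Pi.smul_apply', Function.comp_apply, smul_smul, smul_smul, mul_assoc]

lemma tendsto_windowCurve [ContinuousSMul ℝ E] (hB : IsVonNBounded ℝ B) (hb : ∀ n, b n ∈ B)
    (k : ℕ) :
    Tendsto (windowCurve (fun n => fastDecay n • b n) k) (𝓝 0) (𝓝 0) := by
  have h := tendsto_id.smul (tendsto_inv_smul_windowCurve hB hb k)
  rw [zero_smul] at h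
  refine h.congr fun t => ?_
  rcases eq_or_ne t 0 with rfl | ht
  · simp [windowCurve_zero]
  · exact smul_inv_smul₀ ht _

theorem isSmoothCurve_windowCurve [ContinuousAdd E] [ContinuousSMul ℝ E]
    (hB : IsVonNBounded ℝ B) (hb : ∀ n, b n ∈ B) :
    IsSmoothCurve (windowCurve (fun n => fastDecay n • b n) 0) := by
  refine ⟨windowCurve _, rfl, fun k t => ?_, fun k => continuous_iff_continuousAt.2 fun t => ?_⟩
  · rcases eq_or_ne t 0 with rfl | ht
    · simpa [CurveDerivAt, windowCurve_zero] using
        (tendsto_inv_smul_windowCurve hB hb k).mono_left nhdsWithin_le_nhds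
    · exact curveDerivAt_windowCurve _ k ht
  · rcases eq_or_ne t 0 with rfl | ht
    · simpa [ContinuousAt, windowCurve_zero] using tendsto_windowCurve hB hb k
    · exact continuousAt_windowCurve _ k ht

lemma IsSmoothCurve.isOpen_preimage {c : ℝ → E} (hc : IsSmoothCurve c) {U : Set E}
    (hU : IsOpen[cInfTopology E] U) : IsOpen (c ⁻¹' U) :=
  isOpen_coinduced.1 (isOpen_iSup_iff.1 hU ⟨c, hc⟩)

end

theorem cInf_open_absorbs_bounded_general {E : Type*} [AddCommGroup E] [Module ℝ E] [TopologicalSpace E]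
    [IsTopologicalAddGroup E] [ContinuousSMul ℝ E] (U : Set E)
    (h0 : (0 : E) ∈ U)
    (hU : @IsOpen E (cInfTopology E) U) (B : Set E)
    (hB : Bornology.IsVonNBounded ℝ B) :
    ∃ r : ℝ, 0 < r ∧ B ⊆ r • U := by
  by_contra! hnot
  choose b hbB hbU using fun n =>
    not_subset.1 (hnot (fastDecay n)⁻¹ (inv_pos.2 (fastDecay_pos n)))
  set c := windowCurve (fun n => fastDecay n • b n) 0
  have hc : c ⁻¹' U ∈ 𝓝 0 :=
    ((isSmoothCurve_windowCurve hB hbB).isOpen_preimage hU).mem_nhds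
      (by simpa [c, windowCurve_zero])
  obtain ⟨m, hm⟩ := ((tendsto_inv_atTop_zero.comp
    (tendsto_pow_atTop_atTop_of_one_lt one_lt_two)).eventually hc).exists
  refine hbU m ⟨fastDecay m • b m, ?_, inv_smul_smul₀ (fastDecay_pos m).ne' _⟩
  simpa [c, windowCurve_zero_inv_two_pow] using hm

theorem cInf_open_absorbs_bounded {E : Type*} [AddCommGroup E] [Module ℝ E] [TopologicalSpace E]
    [IsTopologicalAddGroup E] [ContinuousSMul ℝ E] [LocallyConvexSpace ℝ E] [T2Space E] (U : Set E)
    (h0 : (0 : E) ∈ U) (hUc : AbsolutelyConvex U)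
    (hU : @IsOpen E (cInfTopology E) U) (B : Set E)
    (hB : Bornology.IsVonNBounded ℝ B) :
    ∃ r : ℝ, 0 < r ∧ B ⊆ r • U :=
  cInf_open_absorbs_bounded_general U h0 hU B hB
end
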